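/- Let f be a polynomial vector field on ℂ^n of degree m with top homogeneous part p = f^{(m)}, and suppose p(e_1) = γ·e_1 for some γ ∈ ℂ, where e_1 = (1,0,…,0). Then e_1 is an eigenvector of the Jacobian Dp(e_1) with eigenvalue m·γ, and if the characteristic polynomial of Dp(e_1) factors as (t − mγ)·Π_{i=2}^n (t − β_i), then the characteristic polynomial of the Jacobian of the Poincaré transform f*_{e_1} at the stationary point 0 equals (t + γ)·Π_{i=2}^n (t − (β_i − γ)). -/

import Mathlib

open MvPolynomial

noncomputable section

/-- The Lie derivative `X_f(ψ) = Σ_k f_k · ∂ψ/∂x_k` of the polynomial vector field `f`. -/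
def lieD (n : ℕ) (f : Fin n → MvPolynomial (Fin n) ℂ) (ψ : MvPolynomial (Fin n) ℂ) :
    MvPolynomial (Fin n) ℂ :=
  ∑ k, f k * pderiv k ψ

/-- `f = f^{(0)} + ⋯ + f^{(m)}` is a polynomial vector field of degree `m`
(each component has degree at most `m` and the top part `f^{(m)}` is nonzero). -/
def IsDegVF (n m : ℕ) (f : Fin n → MvPolynomial (Fin n) ℂ) : Prop :=
  (∀ k, (f k).totalDegree ≤ m) ∧ ∃ k, homogeneousComponent m (f k) ≠ 0

/-- The top-degree homogeneous part `f^{(m)}` of `f`. -/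
def topPart (n m : ℕ) (f : Fin n → MvPolynomial (Fin n) ℂ) : Fin n → MvPolynomial (Fin n) ℂ :=
  fun k => homogeneousComponent m (f k)

/-- `ψ` is a semi-invariant of `f`: `ψ` nonconstant and `X_f(ψ) = λ·ψ` for a polynomial `λ`. -/
def IsSemiInv (n : ℕ) (f : Fin n → MvPolynomial (Fin n) ℂ) (ψ : MvPolynomial (Fin n) ℂ) : Prop :=
  ψ.totalDegree ≠ 0 ∧ ∃ lam, lieD n f ψ = lam * ψ

/-- The point `e_1 = (1,0,…,0) ∈ ℂ^n`. -/
def e1vec (n : ℕ) : Fin n → ℂ := fun i => if (i : ℕ) = 0 then 1 else 0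

/-- The homogenization `g_k(x_1,…,x_{n+1}) = Σ_{j=0}^m f_k^{(j)}(x_1,…,x_n)·x_{n+1}^{m-j}`. -/
def homogenize (n m : ℕ) (f : Fin n → MvPolynomial (Fin n) ℂ) (k : Fin n) :
    MvPolynomial (Fin (n + 1)) ℂ :=
  ∑ j ∈ Finset.range (m + 1),
    rename Fin.castSucc (homogeneousComponent j (f k)) * X (Fin.last n) ^ (m - j)

/-- Substitute `x_1 = 1`. -/
def setFirstOne (n : ℕ) (g : MvPolynomial (Fin (n + 1)) ℂ) : MvPolynomial (Fin (n + 1)) ℂ :=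
  aeval (fun i : Fin (n + 1) => if (i : ℕ) = 0 then 1 else X i) g

/-- The Poincaré transform `f*_{e_1}` of `f` (a vector field in the variables
`x_2,…,x_{n+1}`): the component indexed by `a : Fin n` corresponds to the variable with
index `a.succ`, and equals `-g_1(1,x_2,…,x_{n+1})·x_{a.succ} + g_{a+1}(1,x_2,…,x_{n+1})`
for the non-final components and `-g_1(1,x_2,…,x_{n+1})·x_{n+1}` for the final one. -/
def ptVF (n m : ℕ) [NeZero n] (f : Fin n → MvPolynomial (Fin n) ℂ) (a : Fin n) :
    MvPolynomial (Fin (n + 1)) ℂ :=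
  -(setFirstOne n (homogenize n m f 0)) * X a.succ +
    if h : (a : ℕ) + 1 < n then setFirstOne n (homogenize n m f ⟨(a : ℕ) + 1, h⟩) else 0

/-- The Jacobian matrix `D f*_{e_1}(0)` of the Poincaré transform at the origin. -/
def ptJac (n m : ℕ) [NeZero n] (f : Fin n → MvPolynomial (Fin n) ℂ) :
    Matrix (Fin n) (Fin n) ℂ :=
  Matrix.of fun a b => eval (0 : Fin (n + 1) → ℂ) (pderiv b.succ (ptVF n m f a))

/-- The conjugated vector field `T ∘ f ∘ T⁻¹`. -/
def conjVF (n : ℕ) (T : Matrix (Fin n) (Fin n) ℂ) (f : Fin n → MvPolynomial (Fin n) ℂ)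
    (k : Fin n) : MvPolynomial (Fin n) ℂ :=
  ∑ j, T k j • aeval (fun i : Fin n => ∑ l, T⁻¹ i l • (X l : MvPolynomial (Fin n) ℂ)) (f j)

/-- Condition 1: `λ_1,…,λ_n` are linearly independent over `ℚ`. -/
def Cond1 (n : ℕ) (lam : Fin n → ℂ) : Prop :=
  LinearIndependent ℚ lam

/-- Condition 2: `dim_ℚ (ℚλ_1 + ⋯ + ℚλ_n) = n - 1` and there are positive integers `m_i`
with `Σ m_i λ_i = 0`. -/
def Cond2 (n : ℕ) (lam : Fin n → ℂ) : Prop :=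
  Module.finrank ℚ (Submodule.span ℚ (Set.range lam)) = n - 1 ∧
    ∃ μ : Fin n → ℕ, (∀ i, 0 < μ i) ∧ ∑ i, (μ i : ℂ) * lam i = 0

/-- `lam` enumerates the eigenvalues of `M` with multiplicity. -/
def HasEigenvalues (n : ℕ) (M : Matrix (Fin n) (Fin n) ℂ) (lam : Fin n → ℂ) : Prop :=
  M.charpoly = ∏ i, (Polynomial.X - Polynomial.C (lam i))

/-- Property E: for every stationary point at infinity, i.e. every direction `v ≠ 0` with
`f^{(m)}(v) ∈ ℂ·v`, the eigenvalues (with multiplicity) of the Jacobian `D f*_v(0)` of the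
Poincaré transform `f*_v = (T∘f∘T⁻¹)*_{e_1}` (for any invertible `T` with `Tv = e_1`)
satisfy condition 1 or condition 2. -/
def PropertyE (n m : ℕ) [NeZero n] (f : Fin n → MvPolynomial (Fin n) ℂ) : Prop :=
  ∀ v : Fin n → ℂ, v ≠ 0 →
    (∃ c : ℂ, (fun k => eval v (topPart n m f k)) = c • v) →
    ∀ T : Matrix (Fin n) (Fin n) ℂ, IsUnit T.det → T.mulVec v = e1vec n →
      ∃ lam : Fin n → ℂ,
        HasEigenvalues n (ptJac n m (conjVF n T f)) lam ∧ (Cond1 n lam ∨ Cond2 n lam)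

/-- The vanishing ideal of a subset `Y ⊆ ℂ^n`. -/
def vanIdeal (n : ℕ) (Y : Set (Fin n → ℂ)) : Ideal (MvPolynomial (Fin n) ℂ) where
  carrier := {g | ∀ x ∈ Y, eval x g = 0}
  add_mem' := by
    intro a b ha hb x hx
    simp only [Set.mem_setOf_eq, map_add] at *
    rw [ha x hx, hb x hx, add_zero]
  zero_mem' := by
    intro x _
    simp
  smul_mem' := by
    intro c g hg x hx
    simp only [Set.mem_setOf_eq, smul_eq_mul, map_mul] at *
    rw [hg x hx, mul_zero]

/-- Property S: every proper homogeneous (conical) algebraic subvariety `Y ⊊ ℂ^n` of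
dimension `≥ 1` that is invariant under `f^{(m)}` contains a line `ℂ·v` with `v ≠ 0` and
`f^{(m)}(v) ∈ ℂ·v`. -/
def PropertyS (n m : ℕ) (f : Fin n → MvPolynomial (Fin n) ℂ) : Prop :=
  ∀ Y : Set (Fin n → ℂ),
    (∀ c : ℂ, ∀ x ∈ Y, c • x ∈ Y) →
    Y = {x | ∀ g ∈ vanIdeal n Y, eval x g = 0} →
    Y ≠ Set.univ →
    1 ≤ ringKrullDim (MvPolynomial (Fin n) ℂ ⧸ vanIdeal n Y) →
    (∀ g ∈ vanIdeal n Y, lieD n (topPart n m f) g ∈ vanIdeal n Y) →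
    ∃ v : Fin n → ℂ, v ≠ 0 ∧ v ∈ Y ∧
      ∃ c : ℂ, (fun k => eval v (topPart n m f k)) = c • v

/-! Euler's identity for the homogeneous top part `p` gives `Dp(e₁) e₁ = m p(e₁) = mγ e₁`, so the
first column of `Dp(e₁)` is `mγ e₁` and its characteristic polynomial splits off `t - mγ`, leaving
the minor `B` on the coordinates `x₂,…,xₙ`. Setting `x₁ = 1` and `x_{n+1} = 0` in the homogenization
keeps only the top part, so at the origin the Jacobian of the Poincaré transform is `B - γ` bordered
by the last row `(0,…,0,-γ)` coming from `-g₁·x_{n+1}`; its characteristic polynomial is therefore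
`(t + γ)·χ_B(t + γ)`. -/

namespace Matrix

variable {R m n : Type*} [CommRing R] [DecidableEq m] [DecidableEq n] [Fintype m] [Fintype n]

lemma charmatrix_submatrix (M : Matrix n n R) {e : m → n} (he : Function.Injective e) :
    (charmatrix M).submatrix e e = charmatrix (M.submatrix e e) := by
  ext i j
  simp [charmatrix_apply, diagonal_apply, he.eq_iff]

lemma charpoly_eq_of_row_eq_zero {N : ℕ} (M : Matrix (Fin (N + 1)) (Fin (N + 1)) R)
    (i : Fin (N + 1)) (h : ∀ j ≠ i, M i j = 0) :
    M.charpoly = (Polynomial.X - Polynomial.C (M i i)) *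
      (M.submatrix i.succAbove i.succAbove).charpoly := by
  rw [charpoly, det_succ_row _ i, Finset.sum_eq_single i, charmatrix_apply_eq,
    charmatrix_submatrix _ Fin.succAbove_right_injective, Even.neg_one_pow ⟨i, rfl⟩, one_mul]
  · rfl
  · intro j _ hj
    rw [charmatrix_apply_ne _ _ _ hj.symm, h j hj, map_zero, neg_zero, mul_zero, zero_mul]
  · simp

lemma charpoly_eq_of_col_eq_zero {N : ℕ} (M : Matrix (Fin (N + 1)) (Fin (N + 1)) R)
    (j : Fin (N + 1)) (h : ∀ i ≠ j, M i j = 0) :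
    M.charpoly = (Polynomial.X - Polynomial.C (M j j)) *
      (M.submatrix j.succAbove j.succAbove).charpoly := by
  simpa [← transpose_submatrix, charpoly_transpose] using charpoly_eq_of_row_eq_zero Mᵀ j h

end Matrix

lemma MvPolynomial.IsHomogeneous.eval_single_one_pderiv {σ R : Type*} [CommSemiring R] [Fintype σ]
    [DecidableEq σ] {φ : MvPolynomial σ R} {m : ℕ} (hφ : φ.IsHomogeneous m) (i : σ) :
    eval (Pi.single i 1) (pderiv i φ) = m * eval (Pi.single i 1) φ := by
  simpa [Pi.single_apply, nsmul_eq_mul] using congrArg (eval (Pi.single i 1)) hφ.sum_X_mul_pderiv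

lemma eval_setFirstOne {n : ℕ} (x : Fin (n + 1) → ℂ) (g : MvPolynomial (Fin (n + 1)) ℂ) :
    eval x (setFirstOne n g) = eval (Function.update x 0 1) g := by
  induction g using MvPolynomial.induction_on with
  | C a => simp [setFirstOne]
  | add p q hp hq => simp only [setFirstOne, map_add] at *; rw [hp, hq]
  | mul_X p i hp =>
    simp only [setFirstOne, map_mul] at *
    rw [hp]
    simp only [Fin.val_eq_zero_iff, aeval_X, eval_X]
    by_cases hi : i = 0 <;> simp [hi]

lemma pderiv_setFirstOne {n : ℕ} {j : Fin (n + 1)} (hj : j ≠ 0)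
    (g : MvPolynomial (Fin (n + 1)) ℂ) :
    pderiv j (setFirstOne n g) = setFirstOne n (pderiv j g) := by
  induction g using MvPolynomial.induction_on with
  | C a => simp [setFirstOne]
  | add p q hp hq => simp only [setFirstOne, map_add] at *; rw [hp, hq]
  | mul_X p i hp =>
    simp only [setFirstOne, map_mul, Derivation.leibniz, map_add, smul_eq_mul] at *
    rw [hp]
    simp only [Fin.val_eq_zero_iff, aeval_X]
    by_cases hi : i = 0
    · subst hi; simp [pderiv_X, hj]
    · simp [hi, pderiv_X, Pi.single_apply]

lemma eval_homogenize_of_last_eq_zero {n m : ℕ} (f : Fin n → MvPolynomial (Fin n) ℂ) (k : Fin n)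
    {y : Fin (n + 1) → ℂ} (hy : y (Fin.last n) = 0) :
    eval y (homogenize n m f k) = eval (y ∘ Fin.castSucc) (topPart n m f k) := by
  rw [homogenize, map_sum, Finset.sum_eq_single m]
  · simp [eval_rename, topPart]
  · intro j hj hjm
    have : m - j ≠ 0 := by have := Finset.mem_range.mp hj; omega
    simp [hy, this]
  · simp

lemma eval_pderiv_castSucc_homogenize_of_last_eq_zero {n m : ℕ}
    (f : Fin n → MvPolynomial (Fin n) ℂ) (k i : Fin n)
    {y : Fin (n + 1) → ℂ} (hy : y (Fin.last n) = 0) :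
    eval y (pderiv i.castSucc (homogenize n m f k)) =
      eval (y ∘ Fin.castSucc) (pderiv i (topPart n m f k)) := by
  rw [homogenize, map_sum, map_sum, Finset.sum_eq_single m]
  · simp [pderiv_rename (Fin.castSucc_injective n), eval_rename, topPart]
  · intro j hj hjm
    have : m - j ≠ 0 := by have := Finset.mem_range.mp hj; omega
    simp [pderiv_rename (Fin.castSucc_injective n), pderiv_X, hy, this]
  · simp


lemma e1vec_eq_single {n : ℕ} [NeZero n] : e1vec n = Pi.single 0 (1 : ℂ) := by
  funext i
  simp [e1vec, Pi.single_apply, Fin.val_eq_zero_iff]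

lemma single_zero_comp_castSucc {n : ℕ} :
    (Pi.single (0 : Fin (n + 1)) (1 : ℂ)) ∘ Fin.castSucc = e1vec n := by
  funext i
  simp [e1vec, Pi.single_apply, Fin.ext_iff]

lemma single_zero_last {n : ℕ} [NeZero n] :
    (Pi.single (0 : Fin (n + 1)) (1 : ℂ) : Fin (n + 1) → ℂ) (Fin.last n) = 0 := by
  simp [Fin.ext_iff, NeZero.ne n]

section PoincareTransform

variable {n m : ℕ} [NeZero n] (f : Fin n → MvPolynomial (Fin n) ℂ)

lemma eval_zero_setFirstOne_homogenize (k : Fin n) :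
    eval 0 (setFirstOne n (homogenize n m f k)) = eval (e1vec n) (topPart n m f k) := by
  rw [eval_setFirstOne, ← single_zero_comp_castSucc]
  exact eval_homogenize_of_last_eq_zero f k single_zero_last

lemma eval_zero_pderiv_setFirstOne_homogenize (k : Fin n) {i : Fin n} (hi : i ≠ 0) :
    eval 0 (pderiv i.castSucc (setFirstOne n (homogenize n m f k))) =
      eval (e1vec n) (pderiv i (topPart n m f k)) := by
  rw [pderiv_setFirstOne (Fin.castSucc_ne_zero_iff.mpr hi), eval_setFirstOne,
    ← single_zero_comp_castSucc]
  exact eval_pderiv_castSucc_homogenize_of_last_eq_zero f k i single_zero_last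

lemma ptJac_apply (a b : Fin n) :
    ptJac n m f a b =
      -eval 0 (setFirstOne n (homogenize n m f 0)) * (1 : Matrix (Fin n) (Fin n) ℂ) a b +
        if h : (a : ℕ) + 1 < n then
          eval 0 (pderiv b.succ (setFirstOne n (homogenize n m f ⟨(a : ℕ) + 1, h⟩)))
        else 0 := by
  simp only [ptJac, ptVF, Matrix.of_apply, map_add, neg_mul, map_neg, Derivation.leibniz,
    pderiv_X, smul_eq_mul, map_mul, eval_X, Pi.zero_apply, Matrix.one_apply,
    Pi.single_apply, Fin.succ_inj]
  split_ifs <;> simp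

end PoincareTransform


def topJacobian (n m : ℕ) (f : Fin n → MvPolynomial (Fin n) ℂ) : Matrix (Fin n) (Fin n) ℂ :=
  Matrix.of fun a b => eval (e1vec n) (pderiv b (topPart n m f a))

section StationaryPoint

variable {n m : ℕ} {f : Fin n → MvPolynomial (Fin n) ℂ} {γ : ℂ}

lemma topJacobian_apply_zero [NeZero n]
    (hstat : ∀ k, eval (e1vec n) (topPart n m f k) = γ * e1vec n k) (a : Fin n) :
    topJacobian n m f a 0 = m * γ * e1vec n a := by
  have hp : (topPart n m f a).IsHomogeneous m := homogeneousComponent_isHomogeneous m (f a)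
  rw [topJacobian, Matrix.of_apply, e1vec_eq_single, hp.eval_single_one_pderiv,
    ← e1vec_eq_single, hstat, mul_assoc]

lemma topJacobian_mulVec_e1vec [NeZero n]
    (hstat : ∀ k, eval (e1vec n) (topPart n m f k) = γ * e1vec n k) :
    (topJacobian n m f).mulVec (e1vec n) = ((m : ℂ) * γ) • e1vec n := by
  funext a
  conv_lhs => rw [e1vec_eq_single, Matrix.mulVec_single_one]
  simp [topJacobian_apply_zero hstat]

end StationaryPoint

section StationaryPointSucc

variable {N m : ℕ} {f : Fin (N + 1) → MvPolynomial (Fin (N + 1)) ℂ} {γ : ℂ}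

lemma charpoly_topJacobian
    (hstat : ∀ k, eval (e1vec (N + 1)) (topPart (N + 1) m f k) = γ * e1vec (N + 1) k) :
    (topJacobian (N + 1) m f).charpoly = (Polynomial.X - Polynomial.C ((m : ℂ) * γ)) *
      ((topJacobian (N + 1) m f).submatrix Fin.succ Fin.succ).charpoly := by
  rw [Matrix.charpoly_eq_of_col_eq_zero _ 0 fun a ha => ?_, Fin.succAbove_zero,
    topJacobian_apply_zero hstat]
  · simp [e1vec]
  · simp [topJacobian_apply_zero hstat, e1vec_eq_single, ha]

lemma ptJac_apply_last
    (hγ : eval (e1vec (N + 1)) (topPart (N + 1) m f 0) = γ) (b : Fin (N + 1)) :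
    ptJac (N + 1) m f (Fin.last N) b =
      -γ * (1 : Matrix (Fin (N + 1)) (Fin (N + 1)) ℂ) (Fin.last N) b := by
  rw [ptJac_apply, eval_zero_setFirstOne_homogenize, hγ, dif_neg (by simp), add_zero]

lemma ptJac_submatrix_castSucc
    (hγ : eval (e1vec (N + 1)) (topPart (N + 1) m f 0) = γ) :
    (ptJac (N + 1) m f).submatrix Fin.castSucc Fin.castSucc =
      (topJacobian (N + 1) m f).submatrix Fin.succ Fin.succ - Matrix.scalar (Fin N) γ := by
  ext a b
  have hb : b.castSucc.succ = b.succ.castSucc := rfl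
  have ha : (⟨(a.castSucc : ℕ) + 1, by simp⟩ : Fin (N + 1)) = a.succ := rfl
  rw [Matrix.submatrix_apply, ptJac_apply, dif_pos (by simp), ha, hb,
    eval_zero_pderiv_setFirstOne_homogenize _ _ (Fin.succ_ne_zero b),
    eval_zero_setFirstOne_homogenize, hγ]
  simp only [topJacobian, Matrix.one_apply, Fin.castSucc_inj, Matrix.sub_apply,
    Matrix.scalar_apply, Matrix.diagonal_apply, Matrix.submatrix_apply, Matrix.of_apply]
  split_ifs <;> ring

lemma charpoly_ptJac (hγ : eval (e1vec (N + 1)) (topPart (N + 1) m f 0) = γ) :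
    (ptJac (N + 1) m f).charpoly = (Polynomial.X + Polynomial.C γ) *
      ((topJacobian (N + 1) m f).submatrix Fin.succ Fin.succ).charpoly.comp
        (Polynomial.X + Polynomial.C γ) := by
  rw [Matrix.charpoly_eq_of_row_eq_zero _ (Fin.last N)
      fun b hb => by simp [ptJac_apply_last hγ, Ne.symm hb],
    Fin.succAbove_last, ptJac_submatrix_castSucc hγ, Matrix.charpoly_sub_scalar,
    ptJac_apply_last hγ]
  simp [sub_eq_add_neg]

end StationaryPointSucc

theorem stmt7_general (n m : ℕ) [NeZero n] (f : Fin n → MvPolynomial (Fin n) ℂ)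
    (γ : ℂ)
    (hstat : (fun k => eval (e1vec n) (topPart n m f k)) = γ • e1vec n) :
    (Matrix.of fun a b : Fin n =>
        eval (e1vec n) (pderiv b (topPart n m f a))).mulVec (e1vec n) =
      ((m : ℂ) * γ) • e1vec n ∧
    ∀ β : Fin (n - 1) → ℂ,
      (Matrix.of fun a b : Fin n => eval (e1vec n) (pderiv b (topPart n m f a))).charpoly =
        (Polynomial.X - Polynomial.C ((m : ℂ) * γ)) *
          ∏ i, (Polynomial.X - Polynomial.C (β i)) →
      (ptJac n m f).charpoly =
        (Polynomial.X + Polynomial.C γ) *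
          ∏ i : Fin (n - 1), (Polynomial.X - Polynomial.C (β i - γ)) := by
  have hstat' (k : Fin n) : eval (e1vec n) (topPart n m f k) = γ * e1vec n k := congrFun hstat k
  refine ⟨topJacobian_mulVec_e1vec hstat', fun β hβ => ?_⟩
  obtain ⟨N, rfl⟩ := Nat.exists_eq_add_one_of_ne_zero (NeZero.ne n)
  have hγ : eval (e1vec (N + 1)) (topPart (N + 1) m f 0) = γ := by simp [hstat', e1vec]
  have hsub : ((topJacobian (N + 1) m f).submatrix Fin.succ Fin.succ).charpoly =
      ∏ i : Fin N, (Polynomial.X - Polynomial.C (β i)) :=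
    mul_left_cancel₀ (Polynomial.X_sub_C_ne_zero _) ((charpoly_topJacobian hstat').symm.trans hβ)
  rw [charpoly_ptJac hγ, hsub, Polynomial.prod_comp]
  congr 1
  refine Finset.prod_congr rfl fun i _ => ?_
  simp only [Polynomial.sub_comp, Polynomial.X_comp, Polynomial.C_comp, Polynomial.C_sub]
  ring

/-- Let `p = f^{(m)}` be the top part of `f` and suppose `p(e_1) = γ·e_1`. Then `e_1` is an
eigenvector of `Dp(e_1)` with eigenvalue `m·γ`, and if the characteristic polynomial of
`Dp(e_1)` factors as `(t - mγ)·Π_{i=2}^n (t - β_i)`, then the characteristic polynomial of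
the Jacobian of the Poincaré transform `f*_{e_1}` at the stationary point `0` equals
`(t + γ)·Π_{i=2}^n (t - (β_i - γ))`. -/
theorem stmt7 (n m : ℕ) [NeZero n] (f : Fin n → MvPolynomial (Fin n) ℂ)
    (hf : IsDegVF n m f)
    (γ : ℂ)
    (hstat : (fun k => eval (e1vec n) (topPart n m f k)) = γ • e1vec n) :
    (Matrix.of fun a b : Fin n =>
        eval (e1vec n) (pderiv b (topPart n m f a))).mulVec (e1vec n) =
      ((m : ℂ) * γ) • e1vec n ∧
    ∀ β : Fin (n - 1) → ℂ,
      (Matrix.of fun a b : Fin n => eval (e1vec n) (pderiv b (topPart n m f a))).charpoly =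
        (Polynomial.X - Polynomial.C ((m : ℂ) * γ)) *
          ∏ i, (Polynomial.X - Polynomial.C (β i)) →
      (ptJac n m f).charpoly =
        (Polynomial.X + Polynomial.C γ) *
          ∏ i : Fin (n - 1), (Polynomial.X - Polynomial.C (β i - γ)) :=
  stmt7_general n m f γ hstat
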